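/- Let α ∈ ℂ be a nonzero constant. In the algebra of ℂ-linear endomorphisms of ℂ[x], let D be differentiation and X multiplication by x, and define the Dixmier operators L = (D³ + X² + α)² + 2D and M = (D³ + X² + α)³ + 3D⁴ + 3(X² + α)∘D + 3X. Then L and M commute: L∘M = M∘L. -/
import Mathlib


open Polynomial

/-- The differentiation operator on `ℂ[x]`, as a `ℂ`-linear endomorphism. -/
noncomputable def Dop : Module.End ℂ (Polynomial ℂ) := Polynomial.derivative

/-- The operator of multiplication by `x` on `ℂ[x]`, as a `ℂ`-linear endomorphism. -/
noncomputable def Xop : Module.End ℂ (Polynomial ℂ) := LinearMap.mulLeft ℂ Polynomial.X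

/-- Core computation: if `d t = t d + 2x`, `t x = x t + 3 d²`, `d x = x d + 1`,
then `t² + 2d` and `t³ + 3 t d + 3 x` commute. -/
lemma dixmier_core {R : Type*} [Ring R] (d x t : R)
    (h1 : d * x = x * d + 1)
    (h2 : d * t = t * d + 2 * x)
    (h3 : t * x = x * t + 3 * d ^ 2) :
    (t ^ 2 + 2 * d) * (t ^ 3 + 3 * (t * d) + 3 * x)
      = (t ^ 3 + 3 * (t * d) + 3 * x) * (t ^ 2 + 2 * d) := by
  have h4 : d ^ 2 * t = t * d ^ 2 + 4 * (x * d) + 2 := by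
    calc d ^ 2 * t = d * (d * t) := by noncomm_ring <;> norm_num [nsmul_eq_mul]
      _ = d * (t * d + 2 * x) := by rw [h2]
      _ = (d * t) * d + 2 * (d * x) := by noncomm_ring <;> norm_num [nsmul_eq_mul]
      _ = (t * d + 2 * x) * d + 2 * (x * d + 1) := by rw [h1, h2]
      _ = t * d ^ 2 + 4 * (x * d) + 2 := by noncomm_ring <;> norm_num [nsmul_eq_mul]
  have h5 : t * (x * t) = x * t ^ 2 + 3 * (t * d ^ 2) + 12 * (x * d) + 6 := by
    calc t * (x * t) = (t * x) * t := by noncomm_ring <;> norm_num [nsmul_eq_mul]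
      _ = (x * t + 3 * d ^ 2) * t := by rw [h3]
      _ = x * t ^ 2 + 3 * (d ^ 2 * t) := by noncomm_ring <;> norm_num [nsmul_eq_mul]
      _ = x * t ^ 2 + 3 * (t * d ^ 2 + 4 * (x * d) + 2) := by rw [h4]
      _ = x * t ^ 2 + 3 * (t * d ^ 2) + 12 * (x * d) + 6 := by noncomm_ring <;> norm_num [nsmul_eq_mul]
  have h6 : t ^ 2 * x = x * t ^ 2 + 6 * (t * d ^ 2) + 12 * (x * d) + 6 := by
    calc t ^ 2 * x = t * (t * x) := by noncomm_ring <;> norm_num [nsmul_eq_mul]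
      _ = t * (x * t + 3 * d ^ 2) := by rw [h3]
      _ = t * (x * t) + 3 * (t * d ^ 2) := by noncomm_ring <;> norm_num [nsmul_eq_mul]
      _ = x * t ^ 2 + 3 * (t * d ^ 2) + 12 * (x * d) + 6 + 3 * (t * d ^ 2) := by rw [h5]
      _ = x * t ^ 2 + 6 * (t * d ^ 2) + 12 * (x * d) + 6 := by noncomm_ring <;> norm_num [nsmul_eq_mul]
  have h7 : d * t ^ 2 = t ^ 2 * d + 2 * (t * x) + 2 * (x * t) := by
    calc d * t ^ 2 = (d * t) * t := by noncomm_ring <;> norm_num [nsmul_eq_mul]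
      _ = (t * d + 2 * x) * t := by rw [h2]
      _ = t * (d * t) + 2 * (x * t) := by noncomm_ring <;> norm_num [nsmul_eq_mul]
      _ = t * (t * d + 2 * x) + 2 * (x * t) := by rw [h2]
      _ = t ^ 2 * d + 2 * (t * x) + 2 * (x * t) := by noncomm_ring <;> norm_num [nsmul_eq_mul]
  have h8 : d * t ^ 3 = t ^ 3 * d + 6 * (x * t ^ 2) + 18 * (t * d ^ 2)
      + 48 * (x * d) + 24 := by
    calc d * t ^ 3 = (d * t ^ 2) * t := by noncomm_ring <;> norm_num [nsmul_eq_mul]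
      _ = (t ^ 2 * d + 2 * (t * x) + 2 * (x * t)) * t := by rw [h7]
      _ = t ^ 2 * (d * t) + 2 * (t * (x * t)) + 2 * (x * t ^ 2) := by noncomm_ring <;> norm_num [nsmul_eq_mul]
      _ = t ^ 2 * (t * d + 2 * x)
          + 2 * (x * t ^ 2 + 3 * (t * d ^ 2) + 12 * (x * d) + 6)
          + 2 * (x * t ^ 2) := by rw [h2, h5]
      _ = t ^ 3 * d + 2 * (t ^ 2 * x) + 4 * (x * t ^ 2) + 6 * (t * d ^ 2)
          + 24 * (x * d) + 12 := by noncomm_ring <;> norm_num [nsmul_eq_mul]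
      _ = t ^ 3 * d + 2 * (x * t ^ 2 + 6 * (t * d ^ 2) + 12 * (x * d) + 6)
          + 4 * (x * t ^ 2) + 6 * (t * d ^ 2) + 24 * (x * d) + 12 := by rw [h6]
      _ = t ^ 3 * d + 6 * (x * t ^ 2) + 18 * (t * d ^ 2) + 48 * (x * d) + 24 := by
          noncomm_ring <;> norm_num [nsmul_eq_mul]
  have h9 : t * (d * t ^ 2) = t ^ 3 * d + 4 * (x * t ^ 2) + 18 * (t * d ^ 2)
      + 48 * (x * d) + 24 := by
    calc t * (d * t ^ 2) = t * (t ^ 2 * d + 2 * (t * x) + 2 * (x * t)) := by rw [h7]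
      _ = t ^ 3 * d + 2 * (t ^ 2 * x) + 2 * (t * (x * t)) := by noncomm_ring <;> norm_num [nsmul_eq_mul]
      _ = t ^ 3 * d + 2 * (x * t ^ 2 + 6 * (t * d ^ 2) + 12 * (x * d) + 6)
          + 2 * (x * t ^ 2 + 3 * (t * d ^ 2) + 12 * (x * d) + 6) := by rw [h5, h6]
      _ = t ^ 3 * d + 4 * (x * t ^ 2) + 18 * (t * d ^ 2) + 48 * (x * d) + 24 := by
          noncomm_ring <;> norm_num [nsmul_eq_mul]
  have h10 : d * (t * d) = t * d ^ 2 + 2 * (x * d) := by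
    calc d * (t * d) = (d * t) * d := by noncomm_ring <;> norm_num [nsmul_eq_mul]
      _ = (t * d + 2 * x) * d := by rw [h2]
      _ = t * d ^ 2 + 2 * (x * d) := by noncomm_ring <;> norm_num [nsmul_eq_mul]
  have hL : (t ^ 2 + 2 * d) * (t ^ 3 + 3 * (t * d) + 3 * x)
      = t ^ 5 + 5 * (t ^ 3 * d) + 15 * (x * t ^ 2) + 60 * (t * d ^ 2)
        + 150 * (x * d) + 72 := by
    calc (t ^ 2 + 2 * d) * (t ^ 3 + 3 * (t * d) + 3 * x)
        = t ^ 5 + 3 * (t ^ 3 * d) + 3 * (t ^ 2 * x) + 2 * (d * t ^ 3)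
          + 6 * (d * (t * d)) + 6 * (d * x) := by noncomm_ring <;> norm_num [nsmul_eq_mul]
      _ = t ^ 5 + 3 * (t ^ 3 * d)
          + 3 * (x * t ^ 2 + 6 * (t * d ^ 2) + 12 * (x * d) + 6)
          + 2 * (t ^ 3 * d + 6 * (x * t ^ 2) + 18 * (t * d ^ 2) + 48 * (x * d) + 24)
          + 6 * (t * d ^ 2 + 2 * (x * d)) + 6 * (x * d + 1) := by rw [h1, h6, h8, h10]
      _ = t ^ 5 + 5 * (t ^ 3 * d) + 15 * (x * t ^ 2) + 60 * (t * d ^ 2)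
          + 150 * (x * d) + 72 := by noncomm_ring <;> norm_num [nsmul_eq_mul]
  have hR : (t ^ 3 + 3 * (t * d) + 3 * x) * (t ^ 2 + 2 * d)
      = t ^ 5 + 5 * (t ^ 3 * d) + 15 * (x * t ^ 2) + 60 * (t * d ^ 2)
        + 150 * (x * d) + 72 := by
    calc (t ^ 3 + 3 * (t * d) + 3 * x) * (t ^ 2 + 2 * d)
        = t ^ 5 + 2 * (t ^ 3 * d) + 3 * (t * (d * t ^ 2)) + 6 * (t * d ^ 2)
          + 3 * (x * t ^ 2) + 6 * (x * d) := by noncomm_ring <;> norm_num [nsmul_eq_mul]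
      _ = t ^ 5 + 2 * (t ^ 3 * d)
          + 3 * (t ^ 3 * d + 4 * (x * t ^ 2) + 18 * (t * d ^ 2) + 48 * (x * d) + 24)
          + 6 * (t * d ^ 2) + 3 * (x * t ^ 2) + 6 * (x * d) := by rw [h9]
      _ = t ^ 5 + 5 * (t ^ 3 * d) + 15 * (x * t ^ 2) + 60 * (t * d ^ 2)
          + 150 * (x * d) + 72 := by noncomm_ring <;> norm_num [nsmul_eq_mul]
  rw [hL, hR]

/-- Abstract form of the Dixmier commutation, from the single Weyl relation. -/
lemma dixmier_key {R : Type*} [Ring R] (d x a : R)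
    (hdx : d * x = x * d + 1)
    (had : a * d = d * a)
    (hax : a * x = x * a) :
    ((d ^ 3 + x ^ 2 + a) ^ 2 + 2 • d) *
      ((d ^ 3 + x ^ 2 + a) ^ 3 + 3 • (d ^ 4) + 3 • ((x ^ 2 + a) * d) + 3 • x)
    = ((d ^ 3 + x ^ 2 + a) ^ 3 + 3 • (d ^ 4) + 3 • ((x ^ 2 + a) * d) + 3 • x) *
      ((d ^ 3 + x ^ 2 + a) ^ 2 + 2 • d) := by
  have hdx2 : d * x ^ 2 = x ^ 2 * d + 2 * x := by
    calc d * x ^ 2 = (d * x) * x := by noncomm_ring <;> norm_num [nsmul_eq_mul]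
      _ = (x * d + 1) * x := by rw [hdx]
      _ = x * (d * x) + x := by noncomm_ring <;> norm_num [nsmul_eq_mul]
      _ = x * (x * d + 1) + x := by rw [hdx]
      _ = x ^ 2 * d + 2 * x := by noncomm_ring <;> norm_num [nsmul_eq_mul]
  have hd2x : d ^ 2 * x = x * d ^ 2 + 2 * d := by
    calc d ^ 2 * x = d * (d * x) := by noncomm_ring <;> norm_num [nsmul_eq_mul]
      _ = d * (x * d + 1) := by rw [hdx]
      _ = (d * x) * d + d := by noncomm_ring <;> norm_num [nsmul_eq_mul]
      _ = (x * d + 1) * d + d := by rw [hdx]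
      _ = x * d ^ 2 + 2 * d := by noncomm_ring <;> norm_num [nsmul_eq_mul]
  have hd3x : d ^ 3 * x = x * d ^ 3 + 3 * d ^ 2 := by
    calc d ^ 3 * x = d * (d ^ 2 * x) := by noncomm_ring <;> norm_num [nsmul_eq_mul]
      _ = d * (x * d ^ 2 + 2 * d) := by rw [hd2x]
      _ = (d * x) * d ^ 2 + 2 * d ^ 2 := by noncomm_ring <;> norm_num [nsmul_eq_mul]
      _ = (x * d + 1) * d ^ 2 + 2 * d ^ 2 := by rw [hdx]
      _ = x * d ^ 3 + 3 * d ^ 2 := by noncomm_ring <;> norm_num [nsmul_eq_mul]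
  set t : R := d ^ 3 + x ^ 2 + a with ht
  have hdt : d * t = t * d + 2 * x := by
    calc d * t = d * d ^ 3 + d * x ^ 2 + d * a := by rw [ht]; noncomm_ring
      _ = d * d ^ 3 + (x ^ 2 * d + 2 * x) + a * d := by rw [hdx2, had]
      _ = t * d + 2 * x := by rw [ht]; noncomm_ring
  have htx : t * x = x * t + 3 * d ^ 2 := by
    calc t * x = d ^ 3 * x + x ^ 2 * x + a * x := by rw [ht]; noncomm_ring
      _ = (x * d ^ 3 + 3 * d ^ 2) + x ^ 2 * x + x * a := by rw [hd3x, hax]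
      _ = x * t + 3 * d ^ 2 := by rw [ht]; noncomm_ring
  have key := dixmier_core d x t hdx hdt htx
  have hLe : (d ^ 3 + x ^ 2 + a) ^ 2 + 2 • d = t ^ 2 + 2 * d := by
    rw [ht]; noncomm_ring
  have hM : (d ^ 3 + x ^ 2 + a) ^ 3 + 3 • (d ^ 4) + 3 • ((x ^ 2 + a) * d) + 3 • x
      = t ^ 3 + 3 * (t * d) + 3 * x := by
    rw [ht]; noncomm_ring
  rw [hLe, hM]
  exact key

/-- The Weyl relation for `Dop` and `Xop`. -/
lemma weyl_rel : Dop * Xop = Xop * Dop + 1 := by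
  apply LinearMap.ext
  intro p
  simp [Dop, Xop, Module.End.mul_apply, derivative_mul]
  ring

/-- The Dixmier operators `L = (D³ + X² + α)² + 2D` and
`M = (D³ + X² + α)³ + 3D⁴ + 3(X² + α)∘D + 3X` commute. -/
theorem dixmier_rank3_commutes (α : ℂ) (hα : α ≠ 0) :
    letI one : Module.End ℂ (Polynomial ℂ) := 1
    letI L : Module.End ℂ (Polynomial ℂ) :=
      (Dop ^ 3 + Xop ^ 2 + α • one) ^ 2 + 2 • Dop
    letI M : Module.End ℂ (Polynomial ℂ) :=
      (Dop ^ 3 + Xop ^ 2 + α • one) ^ 3 + 3 • (Dop ^ 4)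
        + 3 • ((Xop ^ 2 + α • one) * Dop) + 3 • Xop
    L * M = M * L := by
  have had : (α • (1 : Module.End ℂ (Polynomial ℂ))) * Dop
      = Dop * (α • (1 : Module.End ℂ (Polynomial ℂ))) := by
    rw [smul_mul_assoc, mul_smul_comm, one_mul, mul_one]
  have hax : (α • (1 : Module.End ℂ (Polynomial ℂ))) * Xop
      = Xop * (α • (1 : Module.End ℂ (Polynomial ℂ))) := by
    rw [smul_mul_assoc, mul_smul_comm, one_mul, mul_one]
  exact dixmier_key Dop Xop (α • (1 : Module.End ℂ (Polynomial ℂ))) weyl_rel had hax
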